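/- Let F_R be a rooted graph, λ' > 2, ℓ ∈ ℕ, and let x be an eigenvector of the path extension (F_R, ℓ) with eigenvalue −λ', where v_0…v_ℓ is the attached path (v_0 adjacent to all roots). Writing x_i for the value of x at v_i, one has x_i(x_i + x_{i+1}) ≥ 0 for all i ∈ {0, …, ℓ−1}. -/

import Mathlib

open Matrix Filter
open scoped Classical

noncomputable def adjM {α : Type*} [Fintype α] (G : SimpleGraph α) : Matrix α α ℝ :=
  fun x y => if G.Adj x y then 1 else 0

noncomputable def minEig {α : Type*} [Fintype α] (G : SimpleGraph α) : ℝ :=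
  sInf {μ : ℝ | ∃ x : α → ℝ, x ≠ 0 ∧ adjM G *ᵥ x = μ • x}

/-- The path extension `(F_R, ℓ)`: add a path `v_0 … v_ℓ` (vertices `Fin (ℓ+1)`) to `F`,
joining `v_0` to every vertex of the root set `R`. -/
def pathExt {V : Type*} (F : SimpleGraph V) (R : Set V) (ℓ : ℕ) :
    SimpleGraph (V ⊕ Fin (ℓ + 1)) :=
  SimpleGraph.fromRel (fun x y =>
    match x, y with
    | Sum.inl u, Sum.inl v => F.Adj u v
    | Sum.inl u, Sum.inr i => u ∈ R ∧ (i : ℕ) = 0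
    | Sum.inr i, Sum.inr j => (j : ℕ) = (i : ℕ) + 1
    | _, _ => False)

/-!
Along the path the eigenvector equation is the three-term recurrence
`x_i + λ' x_{i+1} + x_{i+2} = 0`, with `x_{ℓ+1} := 0`. With `a, b, c = x_i, x_{i+1}, x_{i+2}`
and `s = b + c` one gets `a (a + b) = (λ'-1)(λ'-2) b² + (2λ'-3) b s + s²`, so `b (b + c) ≥ 0`
forces `a (a + b) ≥ 0` once `λ' ≥ 2`; the induction runs down from `x_ℓ (x_ℓ + 0) = x_ℓ² ≥ 0`.
-/

noncomputable def pathCoord {V : Type*} {ℓ : ℕ} (x : V ⊕ Fin (ℓ + 1) → ℝ) (n : ℕ) : ℝ :=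
  if h : n < ℓ + 1 then x (Sum.inr ⟨n, h⟩) else 0

lemma pathCoord_val {V : Type*} {ℓ : ℕ} (x : V ⊕ Fin (ℓ + 1) → ℝ) (i : Fin (ℓ + 1)) :
    pathCoord x i = x (Sum.inr i) := by
  simp [pathCoord, i.isLt]

lemma pathCoord_of_lt {V : Type*} {ℓ : ℕ} (x : V ⊕ Fin (ℓ + 1) → ℝ) {n : ℕ} (h : ℓ < n) :
    pathCoord x n = 0 := by
  simp [pathCoord, show ¬ n < ℓ + 1 by omega]

lemma sum_ite_val_eq_pathCoord {V : Type*} {ℓ : ℕ} (x : V ⊕ Fin (ℓ + 1) → ℝ) (n : ℕ) :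
    ∑ k : Fin (ℓ + 1), (if (k : ℕ) = n then x (Sum.inr k) else 0) = pathCoord x n := by
  by_cases h : n < ℓ + 1
  · rw [pathCoord, dif_pos h, Finset.sum_eq_single ⟨n, h⟩] <;> simp +contextual [Fin.ext_iff]
  · simp [pathCoord, h, show ∀ k : Fin (ℓ + 1), (k : ℕ) ≠ n from fun k => by omega]

lemma adjM_mulVec_apply {α : Type*} [Fintype α] (G : SimpleGraph α) (x : α → ℝ) (v : α) :
    (adjM G *ᵥ x) v = ∑ w, if G.Adj v w then x w else 0 := by
  simp [mulVec, dotProduct, adjM, ite_mul]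

lemma pathExt_adj_inr_inl {V : Type*} (F : SimpleGraph V) (R : Set V) (ℓ : ℕ)
    (i : Fin (ℓ + 1)) (u : V) :
    (pathExt F R ℓ).Adj (Sum.inr i) (Sum.inl u) ↔ u ∈ R ∧ (i : ℕ) = 0 := by
  simp [pathExt]

lemma pathExt_adj_inr_inr {V : Type*} (F : SimpleGraph V) (R : Set V) (ℓ : ℕ)
    (i j : Fin (ℓ + 1)) :
    (pathExt F R ℓ).Adj (Sum.inr i) (Sum.inr j) ↔ (j : ℕ) = i + 1 ∨ (i : ℕ) = j + 1 := by
  simp only [pathExt, SimpleGraph.fromRel_adj, ne_eq, Sum.inr.injEq, Fin.ext_iff]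
  omega

lemma pathExt_mulVec_inr_succ {V : Type*} [Fintype V] (F : SimpleGraph V) (R : Set V) (ℓ : ℕ)
    (x : V ⊕ Fin (ℓ + 1) → ℝ) (n : ℕ) (hn : n + 1 < ℓ + 1) :
    (adjM (pathExt F R ℓ) *ᵥ x) (Sum.inr ⟨n + 1, hn⟩) = pathCoord x n + pathCoord x (n + 2) := by
  rw [adjM_mulVec_apply, Fintype.sum_sum_type, ← sum_ite_val_eq_pathCoord,
    ← sum_ite_val_eq_pathCoord, ← Finset.sum_add_distrib]
  simp only [pathExt_adj_inr_inl, pathExt_adj_inr_inr, Nat.add_one_ne_zero, and_false, if_false,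
    Finset.sum_const_zero, zero_add]
  refine Finset.sum_congr rfl fun k _ => ?_
  split_ifs <;> first | omega | simp

lemma mul_add_nonneg_of_recurrence {a b c lam : ℝ} (hlam : 2 ≤ lam) (hrec : a + lam * b + c = 0)
    (h : 0 ≤ b * (b + c)) : 0 ≤ a * (a + b) := by
  obtain rfl : a = -(lam * b + c) := by linarith
  have h1 : 0 ≤ (lam - 1) * (lam - 2) := mul_nonneg (by linarith) (by linarith)
  nlinarith [mul_nonneg h1 (sq_nonneg b), mul_nonneg (by linarith : (0 : ℝ) ≤ 2 * lam - 3) h,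
    sq_nonneg (b + c)]

lemma mul_add_succ_nonneg_of_recurrence {y : ℕ → ℝ} {lam : ℝ} {ℓ : ℕ} (hlam : 2 ≤ lam)
    (hend : y (ℓ + 1) = 0) (hrec : ∀ n < ℓ, y n + lam * y (n + 1) + y (n + 2) = 0) {i : ℕ}
    (hi : i ≤ ℓ) : 0 ≤ y i * (y i + y (i + 1)) := by
  induction hi using Nat.decreasingInduction with
  | self => simpa [hend] using mul_self_nonneg (y ℓ)
  | of_succ k hk ih => exact mul_add_nonneg_of_recurrence hlam (hrec k hk) ih

theorem stmt8_general {V : Type*} [Fintype V] (F : SimpleGraph V) (R : Set V)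
    (ℓ : ℕ) (lam : ℝ) (hlam : 2 < lam) (x : (V ⊕ Fin (ℓ + 1)) → ℝ)
    (heig : adjM (pathExt F R ℓ) *ᵥ x = (-lam) • x) :
    ∀ i j : Fin (ℓ + 1), (j : ℕ) = (i : ℕ) + 1 →
      0 ≤ x (Sum.inr i) * (x (Sum.inr i) + x (Sum.inr j)) := by
  intro i j hij
  have hrec : ∀ n < ℓ, pathCoord x n + lam * pathCoord x (n + 1) + pathCoord x (n + 2) = 0 := by
    intro n hn
    have h := congrFun heig (Sum.inr ⟨n + 1, by omega⟩)
    rw [pathExt_mulVec_inr_succ, Pi.smul_apply, smul_eq_mul,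
      ← pathCoord_val x ⟨n + 1, by omega⟩] at h
    linarith
  have h := mul_add_succ_nonneg_of_recurrence hlam.le (pathCoord_of_lt x (Nat.lt_succ_self ℓ))
    hrec (i := i) (by omega)
  rwa [← hij, pathCoord_val, pathCoord_val] at h

/-- If `x` is an eigenvector of the path extension `(F_R, ℓ)` with eigenvalue `-λ'`,
`λ' > 2`, then `x_i (x_i + x_{i+1}) ≥ 0` for consecutive path vertices `v_i, v_{i+1}`. -/
theorem stmt8 {V : Type*} [Fintype V] (F : SimpleGraph V) (R : Set V) (hR : R.Nonempty)
    (ℓ : ℕ) (lam : ℝ) (hlam : 2 < lam) (x : (V ⊕ Fin (ℓ + 1)) → ℝ) (hx : x ≠ 0)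
    (heig : adjM (pathExt F R ℓ) *ᵥ x = (-lam) • x) :
    ∀ i j : Fin (ℓ + 1), (j : ℕ) = (i : ℕ) + 1 →
      0 ≤ x (Sum.inr i) * (x (Sum.inr i) + x (Sum.inr j)) :=
  stmt8_general F R ℓ lam hlam x heig
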